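/- arXiv:2301.06551 — 3 statements merged into one kernel-verified Lean document; each statement's English description precedes it below -/
import Mathlib

section
/- If S is an m×m unitary complex matrix, then for every positive integer n the n-boson representation B_n(S) is a unitary matrix. -/
/-!
Let `T = S^{⊗n}` act on words `Fin n → α`. It is unitary because `S ↦ S^{⊗n}` is multiplicative
and commutes with `ᴴ`. The permanent of `S^{(μ,ν)}` is `∑_σ T(μ∘σ, ν)` for the canonical words of
`μ` and `ν`, and `T` is invariant under permuting both of its arguments at once. In
`(B_n(S)ᴴ B_n(S))_{ν ν'}` the sum over `μ` with weights `1/μ!` therefore becomes a sum over all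
words `h` (each one is `μ∘σ` for exactly `μ!` permutations `σ`, where `μ` is its occupation),
leaving `∑_π (TᴴT)(ν, ν'∘π) = #{π | ν'∘π = ν}`, which is `ν!` if `ν = ν'` and `0` otherwise.
-/

namespace BSF

variable {α : Type*} [Fintype α] [DecidableEq α]

/-- The canonical list in which each index `i` is repeated `ν i` times. -/
noncomputable def repList (ν : α → ℕ) : List α :=
  Finset.univ.toList.flatMap fun i => List.replicate (ν i) i

set_option linter.unusedSectionVars false in
lemma repList_length (ν : α → ℕ) : (repList ν).length = ∑ i, ν i := by
  simp [repList, List.length_flatMap]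

/-- The index set `T(m,n)`: occupation-number tuples with total `n`. -/
def BosonIdx (α : Type*) [Fintype α] (n : ℕ) := {ν : α → ℕ // ∑ i, ν i = n}

instance {n : ℕ} : DecidableEq (BosonIdx α n) :=
  inferInstanceAs (DecidableEq {ν : α → ℕ // ∑ i, ν i = n})

noncomputable instance {n : ℕ} : Fintype (BosonIdx α n) :=
  Fintype.ofInjective
    (fun ν : BosonIdx α n => fun i : α =>
      (⟨ν.1 i, by
        have h := Finset.single_le_sum (f := ν.1) (fun j _ => Nat.zero_le _) (Finset.mem_univ i)
        rw [ν.2] at h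
        omega⟩ : Fin (n + 1)))
    (fun a b hab => Subtype.ext (funext fun i => congrArg Fin.val (congrFun hab i)))

/-- The permanent of a square complex matrix. -/
noncomputable def permanent {n : ℕ} (M : Matrix (Fin n) (Fin n) ℂ) : ℂ :=
  ∑ σ : Equiv.Perm (Fin n), ∏ i, M (σ i) i

/-- The canonical repetition function associated with an occupation tuple. -/
noncomputable def repFun {n : ℕ} (ν : BosonIdx α n) : Fin n → α :=
  fun k => (repList ν.1).get (Fin.cast ((repList_length ν.1).trans ν.2).symm k)

/-- The `n`-boson representation of a matrix `S`. -/
noncomputable def bosonRep (n : ℕ) (S : Matrix α α ℂ) :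
    Matrix (BosonIdx α n) (BosonIdx α n) ℂ :=
  Matrix.of fun ν ν' =>
    permanent (Matrix.of fun k l => S (repFun ν k) (repFun ν' l)) /
      (Real.sqrt ((∏ i, (ν.1 i).factorial * (ν'.1 i).factorial : ℕ) : ℝ) : ℂ)

/-- Relabeling an occupation tuple by (precomposition with) a permutation of the modes. -/
def permIdx {n : ℕ} (σ : Equiv.Perm α) (ν : BosonIdx α n) : BosonIdx α n :=
  ⟨ν.1 ∘ σ, show ∑ i, ν.1 (σ i) = n from (Equiv.sum_comp σ ν.1).trans ν.2⟩

end BSF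

open scoped Nat Matrix

namespace BSF

section PermComp

lemma card_equiv_eq_ite (A B : Type*) [Fintype A] [Fintype B] [DecidableEq A] [DecidableEq B] :
    Fintype.card (A ≃ B) = if Fintype.card A = Fintype.card B then (Fintype.card A)! else 0 := by
  split_ifs with h
  · exact Fintype.card_equiv (Fintype.equivOfCardEq h)
  · exact Fintype.card_eq_zero_iff.2 ⟨fun e => h (Fintype.card_congr e)⟩

variable {ι β : Type*}

def permCompEqEquiv (g h : ι → β) :
    {σ : Equiv.Perm ι // g ∘ σ = h} ≃ ∀ i, {k // h k = i} ≃ {k // g k = i} where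
  toFun σ i := σ.1.subtypeEquiv fun k => by rw [← congrFun σ.2 k]; rfl
  invFun e := ⟨Equiv.ofFiberEquiv e, funext (Equiv.ofFiberEquiv_map e)⟩
  left_inv σ := by ext; simp [Equiv.ofFiberEquiv]
  right_inv e := by
    funext i
    ext ⟨k, rfl⟩
    rfl

variable [Fintype ι] [DecidableEq ι] [DecidableEq β]

lemma card_perm_comp_eq [Fintype β] (g h : ι → β) :
    Fintype.card {σ : Equiv.Perm ι // g ∘ σ = h} =
      if ∀ i, Fintype.card {k // h k = i} = Fintype.card {k // g k = i}
      then ∏ i, (Fintype.card {k // h k = i})! else 0 := by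
  simp_rw [Fintype.card_congr (permCompEqEquiv g h), Fintype.card_pi, card_equiv_eq_ite]
  simp [Finset.prod_ite_zero]

end PermComp

section TensorPower

variable {R α : Type*} (ι : Type*) [Fintype ι]

def tensorPower [CommSemiring R] (S : Matrix α α R) : Matrix (ι → α) (ι → α) R :=
  Matrix.of fun g h => ∏ k, S (g k) (h k)

variable {ι}

lemma tensorPower_apply_comp_perm [CommSemiring R] (S : Matrix α α R) (g h : ι → α)
    (σ : Equiv.Perm ι) : tensorPower ι S (g ∘ σ) (h ∘ σ) = tensorPower ι S g h :=
  Equiv.prod_comp σ fun k => S (g k) (h k)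

lemma tensorPower_mul [CommSemiring R] [Fintype α] [DecidableEq ι] (A B : Matrix α α R) :
    tensorPower ι (A * B) = tensorPower ι A * tensorPower ι B := by
  ext g h
  simp only [tensorPower, Matrix.mul_apply, Matrix.of_apply, Fintype.prod_sum,
    Finset.prod_mul_distrib]

lemma tensorPower_one [CommSemiring R] [DecidableEq α] : tensorPower ι (1 : Matrix α α R) = 1 := by
  ext g h
  simp [tensorPower, Matrix.one_apply, Finset.prod_ite_zero, funext_iff]

lemma conjTranspose_tensorPower [CommSemiring R] [StarRing R] (S : Matrix α α R) :
    (tensorPower ι S)ᴴ = tensorPower ι Sᴴ := by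
  ext g h
  simp [tensorPower, Matrix.conjTranspose_apply, star_prod]

lemma tensorPower_mem_unitaryGroup [CommRing R] [StarRing R] [Fintype α] [DecidableEq α]
    [DecidableEq ι] {S : Matrix α α R}
    (hS : S ∈ Matrix.unitaryGroup α R) : tensorPower ι S ∈ Matrix.unitaryGroup (ι → α) R := by
  rw [Matrix.mem_unitaryGroup_iff', Matrix.star_eq_conjTranspose] at hS ⊢
  rw [conjTranspose_tensorPower, ← tensorPower_mul, hS, tensorPower_one]

lemma star_sum_perm_mul_sum_perm [CommSemiring R] [StarRing R] [DecidableEq ι]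
    (S : Matrix α α R) (g a b : ι → α) :
    star (∑ σ : Equiv.Perm ι, tensorPower ι S (g ∘ σ) a) *
        ∑ τ : Equiv.Perm ι, tensorPower ι S (g ∘ τ) b =
      ∑ σ : Equiv.Perm ι, ∑ π : Equiv.Perm ι,
        star (tensorPower ι S (g ∘ σ) a) * tensorPower ι S (g ∘ σ) (b ∘ π) := by
  rw [star_sum, Finset.sum_mul]
  refine Finset.sum_congr rfl fun σ _ => ?_
  rw [Finset.mul_sum]
  refine Fintype.sum_equiv ((Equiv.inv _).trans (Equiv.mulRight σ)) _ _ fun τ => ?_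
  rw [← tensorPower_apply_comp_perm S (g ∘ τ) b (τ⁻¹ * σ)]
  simp [Function.comp_def]

end TensorPower

section Occupation

variable {α : Type*} [Fintype α] [DecidableEq α] {n : ℕ}

def occupation (g : Fin n → α) : BosonIdx α n :=
  ⟨fun i => Fintype.card {k // g k = i}, by
    rw [← Fintype.card_sigma, Fintype.card_congr (Equiv.sigmaFiberEquiv g), Fintype.card_fin]⟩

lemma count_repList (ν : α → ℕ) (i : α) : (repList ν).count i = ν i := by
  rw [repList, List.count_flatMap, Finset.sum_map_toList]
  simp [List.count_replicate]

lemma occupation_repFun (ν : BosonIdx α n) : occupation (repFun ν) = ν := by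
  refine Subtype.ext (funext fun i => ?_)
  let v : List.Vector α n := ⟨repList ν.1, (repList_length ν.1).trans ν.2⟩
  change Fintype.card {k // repFun ν k = i} = ν.1 i
  rw [Fintype.card_subtype, show repFun ν = v.get from rfl]
  exact (Fin.card_filter_univ_eq_vector_get_eq_count i v).trans (count_repList ν.1 i)

lemma card_perm_comp_eq_occupation (g h : Fin n → α) :
    Fintype.card {σ : Equiv.Perm (Fin n) // g ∘ σ = h} =
      if occupation h = occupation g then ∏ i, ((occupation h).1 i)! else 0 := by
  rw [card_perm_comp_eq]
  exact if_congr (Subtype.ext_iff.trans funext_iff : occupation h = occupation g ↔ _).symm rfl rfl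

lemma sum_perm_comp {M : Type*} [AddCommMonoid M] (g : Fin n → α) (F : (Fin n → α) → M) :
    ∑ σ : Equiv.Perm (Fin n), F (g ∘ σ) =
      (∏ i, ((occupation g).1 i)!) • ∑ h with occupation h = occupation g, F h := by
  rw [← Finset.sum_fiberwise Finset.univ (fun σ : Equiv.Perm (Fin n) => g ∘ σ), Finset.smul_sum,
    Finset.sum_filter]
  refine Finset.sum_congr rfl fun h _ => ?_
  rw [Finset.sum_congr rfl fun σ hσ => congrArg F (Finset.mem_filter.1 hσ).2, Finset.sum_const,
    ← Fintype.card_subtype, card_perm_comp_eq_occupation]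
  split_ifs with hc <;> simp [hc]

lemma sum_inv_factorial_mul_sum_perm {K : Type*} [Field K] [CharZero K]
    (F : (Fin n → α) → K) :
    ∑ μ : BosonIdx α n, ((∏ i, (μ.1 i)! : ℕ) : K)⁻¹ * ∑ σ : Equiv.Perm (Fin n), F (repFun μ ∘ σ) =
      ∑ h, F h := by
  rw [← Finset.sum_fiberwise Finset.univ occupation F]
  refine Finset.sum_congr rfl fun μ _ => ?_
  rw [sum_perm_comp, occupation_repFun, nsmul_eq_mul,
    inv_mul_cancel_left₀ (Nat.cast_ne_zero.2 (by positivity))]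

end Occupation

section Boson

variable {α : Type*} [Fintype α] {n : ℕ}

noncomputable def sqrtFactorial (ν : BosonIdx α n) : ℝ :=
  √(∏ i, (ν.1 i)! : ℕ)

lemma sqrtFactorial_mul_self (ν : BosonIdx α n) :
    sqrtFactorial ν * sqrtFactorial ν = (∏ i, (ν.1 i)! : ℕ) :=
  Real.mul_self_sqrt (Nat.cast_nonneg _)

lemma sqrtFactorial_pos (ν : BosonIdx α n) : 0 < sqrtFactorial ν :=
  Real.sqrt_pos.2 (by positivity)

variable [DecidableEq α]

lemma bosonRep_apply_eq (S : Matrix α α ℂ) (ν ν' : BosonIdx α n) :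
    bosonRep n S ν ν' =
      (∑ σ : Equiv.Perm (Fin n), tensorPower (Fin n) S (repFun ν ∘ σ) (repFun ν')) /
        ((sqrtFactorial ν * sqrtFactorial ν' : ℝ) : ℂ) := by
  rw [sqrtFactorial, sqrtFactorial, ← Real.sqrt_mul (Nat.cast_nonneg _), ← Nat.cast_mul,
    ← Finset.prod_mul_distrib]
  rfl

lemma star_bosonRep_mul_bosonRep_apply (S : Matrix α α ℂ) (ν ν' : BosonIdx α n) :
    (star (bosonRep n S) * bosonRep n S) ν ν' =
      (∑ π : Equiv.Perm (Fin n),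
        (star (tensorPower (Fin n) S) * tensorPower (Fin n) S) (repFun ν) (repFun ν' ∘ π)) /
        ((sqrtFactorial ν * sqrtFactorial ν' : ℝ) : ℂ) := by
  set T := tensorPower (Fin n) S
  set F : (Fin n → α) → ℂ := fun h => ∑ π : Equiv.Perm (Fin n),
    star (T h (repFun ν)) * T h (repFun ν' ∘ π)
  have hterm : ∀ μ : BosonIdx α n, star (bosonRep n S μ ν) * bosonRep n S μ ν' =
      ((∏ i, (μ.1 i)! : ℕ) : ℂ)⁻¹ * (∑ σ : Equiv.Perm (Fin n), F (repFun μ ∘ σ)) /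
        ((sqrtFactorial ν * sqrtFactorial ν' : ℝ) : ℂ) := by
    intro μ
    have hμ : (sqrtFactorial μ : ℂ) ≠ 0 := Complex.ofReal_ne_zero.2 (sqrtFactorial_pos μ).ne'
    have hstar : ∀ r : ℝ, star (r : ℂ) = r := Complex.conj_ofReal
    rw [bosonRep_apply_eq, bosonRep_apply_eq, star_div₀, hstar, div_mul_div_comm,
      star_sum_perm_mul_sum_perm, ← Complex.ofReal_natCast, ← sqrtFactorial_mul_self]
    push_cast
    field_simp
    rfl
  simp only [Matrix.mul_apply, Matrix.star_apply]
  rw [Finset.sum_congr rfl fun μ _ => hterm μ, ← Finset.sum_div, sum_inv_factorial_mul_sum_perm,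
    Finset.sum_comm]

end Boson

theorem bosonRep_mem_unitaryGroup_general {m n : ℕ}
    (S : Matrix (Fin m) (Fin m) ℂ) (hS : S ∈ Matrix.unitaryGroup (Fin m) ℂ) :
    bosonRep n S ∈ Matrix.unitaryGroup (BosonIdx (Fin m) n) ℂ := by
  rw [Matrix.mem_unitaryGroup_iff']
  ext ν ν'
  have hT := Matrix.mem_unitaryGroup_iff'.1 (tensorPower_mem_unitaryGroup (ι := Fin n) hS)
  simp only [star_bosonRep_mul_bosonRep_apply, hT, Matrix.one_apply, eq_comm (a := repFun ν),
    Finset.sum_boole, ← Fintype.card_subtype, card_perm_comp_eq_occupation, occupation_repFun]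
  split_ifs with h
  · subst h
    rw [← Complex.ofReal_natCast, ← sqrtFactorial_mul_self]
    simp [(sqrtFactorial_pos ν).ne']
  · simp

/-- If `S` is an `m × m` unitary complex matrix, then for every positive
integer `n` the `n`-boson representation `B_n(S)` is a unitary matrix. -/
theorem bosonRep_mem_unitaryGroup {m n : ℕ} (hn : 0 < n)
    (S : Matrix (Fin m) (Fin m) ℂ) (hS : S ∈ Matrix.unitaryGroup (Fin m) ℂ) :
    bosonRep n S ∈ Matrix.unitaryGroup (BosonIdx (Fin m) n) ℂ :=
  bosonRep_mem_unitaryGroup_general S hS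

end BSF
end

section
/- For every even integer m ≥ 2 define P_m = (1/4)·(3 − 1/m + binom(m, m/2)/2^m). Then P_8 = 403/512, and for every even integer m ≥ 2 one has P_m ≤ 403/512, with equality if and only if m = 8. -/
/-- The average success probability of the Bell-state discrimination scheme with
`4(m−1)` ancillary single photons, `P_m = (1/4)(3 − 1/m + C(m, m/2)/2^m)`. -/
def bellSuccessProb (m : ℕ) : ℚ :=
  (1 / 4 : ℚ) * (3 - 1 / (m : ℚ) + (m.choose (m / 2) : ℚ) / 2 ^ m)

/-!
Writing `m = 2k`, one has `P_{2k} = 3/4 + E k / 4` with `E k = C(2k,k)/4^k - 1/(2k)`, and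
`E k - E (k+1) = (k C(2k,k) - 4^k) / (2k(k+1)4^k)`. The numerator is positive for `k ≥ 4`
(`Nat.four_pow_lt_mul_centralBinom`), so `E` strictly decreases from `k = 4` on, while
`E 1 < E 2 < E 3 < E 4 = 19/128` are checked directly.
-/

open Nat

def bellExcess (k : ℕ) : ℚ := (centralBinom k : ℚ) / 4 ^ k - 1 / (2 * k)

theorem bellSuccessProb_two_mul (k : ℕ) :
    bellSuccessProb (2 * k) = 3 / 4 + bellExcess k / 4 := by
  have hpow : (2 : ℚ) ^ (2 * k) = 4 ^ k := by rw [pow_mul]; norm_num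
  rw [bellSuccessProb, bellExcess, Nat.mul_div_cancel_left k two_pos, hpow, centralBinom]
  push_cast
  ring

theorem bellExcess_sub_bellExcess_succ {k : ℕ} (hk : k ≠ 0) :
    bellExcess k - bellExcess (k + 1) =
      ((k : ℚ) * centralBinom k - 4 ^ k) / (2 * k * (k + 1) * 4 ^ k) := by
  have hrec : ((k : ℚ) + 1) * centralBinom (k + 1) = 2 * (2 * k + 1) * centralBinom k := by
    exact_mod_cast succ_mul_centralBinom_succ k
  have hcb : (centralBinom (k + 1) : ℚ) = 2 * (2 * k + 1) * centralBinom k / (k + 1) := by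
    rw [← hrec]; field_simp
  rw [bellExcess, bellExcess, hcb]
  field_simp
  push_cast
  ring

theorem bellExcess_succ_lt {k : ℕ} (hk : 4 ≤ k) : bellExcess (k + 1) < bellExcess k := by
  have hgrowth : (4 : ℚ) ^ k < k * centralBinom k := by
    exact_mod_cast four_pow_lt_mul_centralBinom k hk
  have hdiff := bellExcess_sub_bellExcess_succ (k := k) (by omega)
  have hpos : 0 < ((k : ℚ) * centralBinom k - 4 ^ k) / (2 * k * (k + 1) * 4 ^ k) :=
    div_pos (by linarith) (by positivity)
  linarith

theorem strictAntiOn_bellExcess : StrictAntiOn bellExcess (Set.Ici 4) :=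
  strictAntiOn_Ici_of_lt_pred fun m hm => by
    obtain ⟨k, rfl⟩ : ∃ k, m = k + 1 := ⟨m - 1, by omega⟩
    simpa using bellExcess_succ_lt (k := k) (by omega)

theorem bellExcess_four : bellExcess 4 = 19 / 128 := by
  norm_num [bellExcess, centralBinom, choose]

theorem bellExcess_lt_bellExcess_four {k : ℕ} (hk0 : 0 < k) (hk4 : k ≠ 4) :
    bellExcess k < 19 / 128 := by
  rcases lt_or_gt_of_ne hk4 with hlt | hgt
  · interval_cases k <;> norm_num [bellExcess, centralBinom, choose]
  · rw [← bellExcess_four]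
    exact strictAntiOn_bellExcess (Set.mem_Ici.2 le_rfl) (Set.mem_Ici.2 hgt.le) hgt

/-- `P_8 = 403/512`, and for every even `m ≥ 2` one has
`P_m ≤ 403/512`, with equality iff `m = 8`. -/
theorem bell_success_prob_max :
    bellSuccessProb 8 = 403 / 512 ∧
    ∀ m : ℕ, 2 ≤ m → Even m →
      (bellSuccessProb m ≤ 403 / 512 ∧ (bellSuccessProb m = 403 / 512 ↔ m = 8)) := by
  have h8 : bellSuccessProb 8 = 403 / 512 := by
    rw [show 8 = 2 * 4 from rfl, bellSuccessProb_two_mul, bellExcess_four]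
    norm_num
  refine ⟨h8, fun m hm hev => ?_⟩
  obtain ⟨k, rfl⟩ : ∃ k, m = 2 * k := hev.exists_two_nsmul m
  by_cases hk4 : k = 4
  · subst hk4
    exact ⟨h8.le, iff_of_true h8 rfl⟩
  · have hlt := bellExcess_lt_bellExcess_four (k := k) (by omega) hk4
    rw [bellSuccessProb_two_mul]
    exact ⟨by linarith, iff_of_false (by linarith) (by omega)⟩
end

section
/- Define F : [0,1] → ℝ by F(x) = −x²·log₂(x²/(x²+(1−x)²)) − (1−x)²·log₂((1−x)²/(x²+(1−x)²)), with the convention that a term p²·log₂(p²/(x²+(1−x)²)) is 0 when p = 0. For each positive integer m define E_m = (1/4)·(3 − 1/m + 2^{1−m}·∑_{k=0}^{m} binom(m,k)·F(k/m)). Then E_m tends to 1 as m → ∞. -/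
/-- `F(x) = ∑_{p∈{x,1−x}} −p²·log₂(p²/(x²+(1−x)²))` (with `0·log₂ 0 = 0`, which holds
automatically since `Real.log 0 = 0` in Lean). -/
noncomputable def entangF (x : ℝ) : ℝ :=
  -(x ^ 2 * Real.logb 2 (x ^ 2 / (x ^ 2 + (1 - x) ^ 2))) -
    ((1 - x) ^ 2 * Real.logb 2 ((1 - x) ^ 2 / (x ^ 2 + (1 - x) ^ 2)))

/-- The relative entropy of entanglement of the measurement realized by the Bell-state
discrimination scheme with `4(m−1)` ancillary single photons,
`E_m = (1/4)(3 − 1/m + 2^{1−m} ∑_{k=0}^m C(m,k) F(k/m))`. -/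
noncomputable def entangE (m : ℕ) : ℝ :=
  (1 / 4 : ℝ) * (3 - 1 / (m : ℝ) +
    (2 : ℝ) ^ ((1 : ℤ) - (m : ℤ)) *
      ∑ k ∈ Finset.range (m + 1), (m.choose k : ℝ) * entangF ((k : ℝ) / (m : ℝ)))

lemma entang_aux (y s : ℝ) (hs : s ≠ 0) :
    y ^ 2 * Real.log (y ^ 2 / s) = 2 * y * (y * Real.log y) - y ^ 2 * Real.log s := by
  rcases eq_or_ne y 0 with h | h
  · simp [h]
  · rw [Real.log_div (pow_ne_zero _ h) hs, Real.log_pow]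
    push_cast
    ring

lemma entang_s_ne (x : ℝ) : x ^ 2 + (1 - x) ^ 2 ≠ 0 := by nlinarith [sq_nonneg (2 * x - 1)]

lemma entangF_eq (x : ℝ) :
    entangF x =
      (-(2 * x * (x * Real.log x) - x ^ 2 * Real.log (x ^ 2 + (1 - x) ^ 2)) -
        (2 * (1 - x) * ((1 - x) * Real.log (1 - x)) -
          (1 - x) ^ 2 * Real.log (x ^ 2 + (1 - x) ^ 2))) / Real.log 2 := by
  have hs := entang_s_ne x
  simp only [entangF, Real.logb]
  rw [← mul_div_assoc, ← mul_div_assoc, ← neg_div, div_sub_div_same]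
  congr 1
  linarith [entang_aux x _ hs, entang_aux (1 - x) (x ^ 2 + (1 - x) ^ 2) hs]

lemma continuous_entangF : Continuous entangF := by
  have hxl : Continuous fun x : ℝ => x * Real.log x := Real.continuous_mul_log
  have h1x : Continuous fun x : ℝ => 1 - x := continuous_const.sub continuous_id
  have hs : Continuous fun x : ℝ => x ^ 2 + (1 - x) ^ 2 :=
    ((continuous_id.pow 2).add (h1x.pow 2))
  have hlogs : Continuous fun x : ℝ => Real.log (x ^ 2 + (1 - x) ^ 2) :=
    hs.log entang_s_ne
  have : Continuous fun x : ℝ =>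
      (-(2 * x * (x * Real.log x) - x ^ 2 * Real.log (x ^ 2 + (1 - x) ^ 2)) -
        (2 * (1 - x) * ((1 - x) * Real.log (1 - x)) -
          (1 - x) ^ 2 * Real.log (x ^ 2 + (1 - x) ^ 2))) / Real.log 2 := by
    apply Continuous.div_const
    exact (((continuous_const.mul continuous_id).mul hxl).sub
        ((continuous_id.pow 2).mul hlogs)).neg.sub
      (((continuous_const.mul h1x).mul (hxl.comp h1x)).sub ((h1x.pow 2).mul hlogs))
  exact this.congr fun x => (entangF_eq x).symm

lemma entangF_half : entangF (1 / 2) = 1 / 2 := by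
  have h2 : Real.logb 2 ((1 / 2 : ℝ)) = -1 := by
    rw [show ((1 : ℝ) / 2) = (2 : ℝ)⁻¹ from by norm_num, Real.logb_inv,
      Real.logb_self_eq_one (by norm_num)]
  simp only [entangF]
  norm_num [h2]

open Filter Topology unitInterval bernsteinApproximation in
/-- `E_m → 1` as `m → ∞`: the scheme asymptotically realizes a maximally
entangling two-qubit measurement. -/
theorem entangE_tendsto_one :
    Filter.Tendsto entangE Filter.atTop (nhds (1 : ℝ)) := by
  classical
  set f : C(I, ℝ) := ⟨fun x => entangF x, continuous_entangF.comp continuous_subtype_val⟩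
    with hf
  have hmem : (1 / 2 : ℝ) ∈ I := by constructor <;> norm_num
  set x0 : I := ⟨1 / 2, hmem⟩ with hx0
  have hfx0 : f x0 = 1 / 2 := entangF_half
  have hB : Tendsto (fun n => bernsteinApproximation n f x0) atTop (𝓝 (1 / 2 : ℝ)) := by
    have h := ((ContinuousEvalConst.continuous_eval_const x0).tendsto f).comp
      (bernsteinApproximation_uniform f)
    rw [hfx0] at h
    exact h
  have h1 : Tendsto (fun n : ℕ => (1 : ℝ) / n) atTop (𝓝 0) :=
    tendsto_one_div_atTop_nhds_zero_nat
  have hg : Tendsto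
      (fun n : ℕ => (1 / 4 : ℝ) * (3 - 1 / n + 2 * bernsteinApproximation n f x0))
      atTop (𝓝 1) := by
    have h := (((tendsto_const_nhds (x := (3 : ℝ))).sub h1).add (hB.const_mul 2)).const_mul
      (1 / 4 : ℝ)
    convert h using 2
    norm_num
  refine hg.congr' ?_
  filter_upwards [eventually_ge_atTop 1] with n hn
  have hn0 : (n : ℝ) ≠ 0 := by positivity
  have hkey : bernsteinApproximation n f x0 =
      (2 : ℝ)⁻¹ ^ n * ∑ k ∈ Finset.range (n + 1), (n.choose k : ℝ) * entangF ((k : ℝ) / n) := by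
    rw [bernsteinApproximation.apply, Finset.mul_sum, ← Fin.sum_univ_eq_sum_range]
    refine Finset.sum_congr rfl fun k _ => ?_
    have hk : (k : ℕ) ≤ n := Nat.lt_succ_iff.mp k.isLt
    have hcoef : (x0 : ℝ) ^ (k : ℕ) * (1 - (x0 : ℝ)) ^ (n - (k : ℕ)) = (2 : ℝ)⁻¹ ^ n := by
      have : (1 - (x0 : ℝ)) = (2 : ℝ)⁻¹ := by norm_num [hx0]
      rw [this, show ((x0 : ℝ)) = (2 : ℝ)⁻¹ by norm_num [hx0], ← pow_add,
        Nat.add_sub_cancel' hk]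
    have hz : f (bernstein.z k) = entangF ((k : ℝ) / n) := rfl
    rw [bernstein_apply, hz,
      show ((n.choose (k : ℕ) : ℝ)) * (x0 : ℝ) ^ (k : ℕ) * (1 - (x0 : ℝ)) ^ (n - (k : ℕ))
          = (n.choose (k : ℕ) : ℝ) * (2 : ℝ)⁻¹ ^ n from by rw [mul_assoc, hcoef]]
    ring
  have hpow : (2 : ℝ) ^ ((1 : ℤ) - (n : ℤ)) = 2 * (2 : ℝ)⁻¹ ^ n := by
    rw [zpow_sub₀ (two_ne_zero), zpow_one, zpow_natCast, inv_pow]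
    ring
  rw [entangE, hkey, hpow]
  ring
end
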